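/- Let A be the 2-dimensional complex associative algebra with basis {e₁, e₂} and nonzero products e₁·e₁ = e₁, e₁·e₂ = e₂. Then r = a₁₂(e₁⊗e₂) + a₂₁(e₂⊗e₁) with a₁₂ = −a₂₁ is an antisymmetric solution of the AYBE. -/
import Mathlib


open Finset in
def AYBE {n : ℕ} (mul : Fin n → Fin n → Fin n → ℂ) (r : Fin n → Fin n → ℂ) : Prop :=
  ∀ p q s : Fin n,
    (∑ i, ∑ k, r i q * r k s * mul i k p)
    + (∑ j, ∑ l, r p j * r q l * mul j l s)
    - (∑ i, ∑ l, r i s * r p l * mul i l q) = 0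

/-- Structure constants of the 2-dimensional algebra with `e₁·e₁ = e₁`, `e₁·e₂ = e₂`. -/
def mulA2 : Fin 2 → Fin 2 → Fin 2 → ℂ := fun i j k =>
  if (i = 0 ∧ j = 0 ∧ k = 0) ∨ (i = 0 ∧ j = 1 ∧ k = 1) then 1 else 0

/-- For the algebra `e₁·e₁ = e₁, e₁·e₂ = e₂`, the element
`r = a₁₂ e₁⊗e₂ + a₂₁ e₂⊗e₁` with `a₁₂ = −a₂₁` is an antisymmetric solution of the AYBE. -/
theorem stmt_8 (a₁₂ a₂₁ : ℂ) (h : a₁₂ = -a₂₁) :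
    (let r : Fin 2 → Fin 2 → ℂ := fun i j =>
      if i = 0 ∧ j = 1 then a₁₂ else if i = 1 ∧ j = 0 then a₂₁ else 0
     (∀ i j : Fin 2, r i j = - r j i) ∧ AYBE mulA2 r) := by
  subst h
  refine ⟨?_, ?_⟩
  · intro i j; fin_cases i <;> fin_cases j <;> simp
  · intro p q s
    simp only [AYBE, mulA2, Fin.sum_univ_two]
    fin_cases p <;> fin_cases q <;> fin_cases s <;> simp
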